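/- arXiv:math/0609171 — 3 statements merged into one kernel-verified Lean document; each statement's English description precedes it below -/
import Mathlib

section
/- For the top-swap operators on two decks: for positions i < j with i < x_*(η) for all η with x_*(η) = j, the map T_{i,j} is a bijection from Ω_n^j (configurations with the separator at position j) onto Ω_n^i, with inverse T_{i, n+i-j+2}; that is, T_{i,n+i-j+2}(T_{i,j} η) = η for all η ∈ Ω_n^j and T_{i,j}(T_{i,n+i-j+2} ξ) = ξ for all ξ ∈ Ω_n^i. -/
def TwoDeck (n : ℕ) : Finset (List (Option (Fin n))) :=
  (none :: (List.finRange n).map some).permutations.toFinset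

def xstar {n : ℕ} (L : List (Option (Fin n))) : ℕ := L.idxOf none

def topSwap {n : ℕ} (a b : ℕ) (L : List (Option (Fin n))) :
    List (Option (Fin n)) :=
  let s := xstar L
  if a ≤ s ∧ s ≤ b then
    if s = b then
      L.take a ++ none :: (L.drop (s + 1) ++ (L.drop a).take (s - a))
    else
      L.take a ++ L.drop b ++
        none :: ((L.drop (s + 1)).take (b - (s + 1)) ++ (L.drop a).take (s - a))
  else L

section Helpers

variable {α : Type*} [BEq α] [LawfulBEq α]

lemma idxOf_middle (x : α) (A R : List α) (hA : x ∉ A) :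
    (A ++ x :: R).idxOf x = A.length := by
  induction A with
  | nil => simp [List.idxOf_cons]
  | cons a A ih =>
    have hax : (a == x) = false := by
      rw [beq_eq_false_iff_ne]
      intro h; exact hA (h ▸ (List.mem_cons_self (a := a) (l := A)))
    have ih' := ih (fun h => hA (List.mem_cons_of_mem _ h))
    simp [List.idxOf_cons, hax, ih']

lemma idxOf_decomp (x : α) (L : List α) (h : L.idxOf x < L.length) :
    L = L.take (L.idxOf x) ++ x :: L.drop (L.idxOf x + 1) := by
  induction L with
  | nil => simp at h
  | cons a t ih =>
    cases hb : a == x with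
    | true =>
      have := eq_of_beq hb; subst this
      simp [List.idxOf_cons, hb]
    | false =>
      simp only [List.idxOf_cons, hb, cond_false] at h ⊢
      simp only [List.length_cons, Nat.add_lt_add_iff_right] at h
      rw [List.take_succ_cons, List.drop_succ_cons, List.cons_append]
      exact congrArg (a :: ·) (ih h)

lemma not_mem_of_count_one {A R : List α} {x : α}
    (h : List.count x (A ++ x :: R) = 1) : x ∉ A ∧ x ∉ R := by
  rw [List.count_append, List.count_cons_self] at h
  exact ⟨List.count_eq_zero.mp (by omega), List.count_eq_zero.mp (by omega)⟩

end Helpers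

lemma topSwap_def {n : ℕ} (a b : ℕ) (L : List (Option (Fin n))) :
    topSwap a b L =
      if a ≤ xstar L ∧ xstar L ≤ b then
        if xstar L = b then
          L.take a ++ none :: (L.drop (xstar L + 1) ++ (L.drop a).take (xstar L - a))
        else
          L.take a ++ L.drop b ++
            none :: ((L.drop (xstar L + 1)).take (b - (xstar L + 1)) ++
              (L.drop a).take (xstar L - a))
      else L := rfl

lemma xstar_middle {n : ℕ} (A R : List (Option (Fin n))) (hA : none ∉ A) :
    xstar (A ++ none :: R) = A.length :=
  idxOf_middle none A R hA

lemma swapStarTop {n : ℕ} (A B D : List (Option (Fin n)))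
    (hA : none ∉ A) (hB : none ∉ B) :
    topSwap A.length (A.length + B.length) (A ++ B ++ none :: D)
      = A ++ none :: (D ++ B) := by
  have hx : xstar (A ++ B ++ none :: D) = A.length + B.length := by
    have h : none ∉ A ++ B := by simp [hA, hB]
    rw [xstar_middle (A ++ B) D h, List.length_append]
  rw [topSwap_def, hx, if_pos ⟨Nat.le_add_right _ _, le_refl _⟩, if_pos rfl]
  have h1 : (A ++ B ++ none :: D).take A.length = A := by
    rw [List.append_assoc]; exact List.take_left
  have h2 : (A ++ B ++ none :: D).drop (A.length + B.length + 1) = D := by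
    have h : A ++ B ++ none :: D = (A ++ B ++ [none]) ++ D := by simp
    rw [h]; exact List.drop_left' (by simp; omega)
  have h3 : (A ++ B ++ none :: D).drop A.length = B ++ none :: D := by
    rw [List.append_assoc]; exact List.drop_left
  rw [h1, h2, h3, Nat.add_sub_cancel_left, List.take_left]

lemma swapAtStar {n : ℕ} (A C E : List (Option (Fin n))) (hA : none ∉ A) :
    topSwap A.length (A.length + 1 + C.length) (A ++ none :: (C ++ E))
      = A ++ E ++ none :: C := by
  have hx : xstar (A ++ none :: (C ++ E)) = A.length := xstar_middle _ _ hA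
  rw [topSwap_def, hx, if_pos ⟨le_refl _, by omega⟩, if_neg (by omega)]
  have h1 : (A ++ none :: (C ++ E)).take A.length = A := List.take_left
  have h2 : (A ++ none :: (C ++ E)).drop (A.length + 1 + C.length) = E := by
    have h : A ++ none :: (C ++ E) = (A ++ none :: C) ++ E := by simp
    rw [h]; exact List.drop_left' (by simp; omega)
  have h3 : (A ++ none :: (C ++ E)).drop (A.length + 1) = C ++ E := by
    have h : A ++ none :: (C ++ E) = (A ++ [none]) ++ (C ++ E) := by simp
    rw [h]; exact List.drop_left' (by simp)
  have h4 : (A ++ none :: (C ++ E)).drop A.length = none :: (C ++ E) :=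
    List.drop_left
  rw [h1, h2, h3, h4]
  simp

lemma mem_facts {n : ℕ} {L : List (Option (Fin n))} (h : L ∈ TwoDeck n) :
    L.length = n + 1 ∧ L.count none = 1 := by
  rw [TwoDeck, List.mem_toFinset, List.mem_permutations] at h
  constructor
  · rw [h.length_eq]; simp
  · have hc : L.count none = (none :: (List.finRange n).map some).count none := by
      rw [List.count_eq_countP, List.count_eq_countP]
      exact h.countP_eq _
    rw [hc, List.count_cons_self]
    have hnm : (none : Option (Fin n)) ∉ (List.finRange n).map some := by simp
    rw [List.count_eq_zero.mpr hnm]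

/-- `T_{i,j} : Ω_n^j → Ω_n^i` is a bijection with inverse `T_{i,n+i-j+2}`
(0-indexed: with `a = i-1`, `b = j-1`, the inverse index is `n+1+a-b`):
`T_{i,n+i-j+2}(T_{i,j}η) = η` for `η ∈ Ω_n^j` and
`T_{i,j}(T_{i,n+i-j+2}ξ) = ξ` for `ξ ∈ Ω_n^i`. -/
theorem stmt4 (n a b : ℕ) (hab : a < b) (hb : b ≤ n) :
    (∀ L ∈ TwoDeck n, xstar L = b →
      xstar (topSwap a b L) = a ∧ topSwap a (n + 1 + a - b) (topSwap a b L) = L) ∧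
    (∀ X ∈ TwoDeck n, xstar X = a →
      xstar (topSwap a (n + 1 + a - b) X) = b ∧
        topSwap a b (topSwap a (n + 1 + a - b) X) = X) := by
  constructor
  · intro L hL hxL
    obtain ⟨hlen, hcnt⟩ := mem_facts hL
    have hblt : L.idxOf none < L.length := by
      show xstar L < L.length; omega
    have hdec := idxOf_decomp none L hblt
    set T := L.take (L.idxOf none) with hT
    set D := L.drop (L.idxOf none + 1) with hD
    have hxb : L.idxOf none = b := hxL
    have hTlen : T.length = b := by rw [hT, List.length_take]; omega
    have hDlen : D.length = n - b := by rw [hD, List.length_drop]; omega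
    have hnTD : none ∉ T ∧ none ∉ D :=
      not_mem_of_count_one (by rw [← hdec]; exact hcnt)
    set A := T.take a with hAdef
    set B := T.drop a with hBdef
    have hAlen : A.length = a := by rw [hAdef, List.length_take]; omega
    have hBlen : B.length = b - a := by rw [hBdef, List.length_drop]; omega
    have hnA : none ∉ A := fun hm => hnTD.1 (List.mem_of_mem_take hm)
    have hnB : none ∉ B := fun hm => hnTD.1 (List.mem_of_mem_drop hm)
    have hAB : A ++ B = T := by rw [hAdef, hBdef, List.take_append_drop]
    have hLdec : L = A ++ B ++ none :: D := by rw [hAB, ← hdec]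
    have key1 : topSwap a b L = A ++ none :: (D ++ B) := by
      have h := swapStarTop A B D hnA hnB
      rw [hAlen, hBlen] at h
      rw [hLdec]
      have : a + (b - a) = b := by omega
      rw [this] at h
      exact h
    refine ⟨?_, ?_⟩
    · rw [key1, ← hAlen]
      exact xstar_middle _ _ hnA
    · rw [key1]
      have h := swapAtStar A D B hnA
      rw [hAlen, hDlen] at h
      have harith : n + 1 + a - b = a + 1 + (n - b) := by omega
      rw [harith, h, ← hLdec]
  · intro X hX hxX
    obtain ⟨hlen, hcnt⟩ := mem_facts hX
    have halt : X.idxOf none < X.length := by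
      show xstar X < X.length; omega
    have hdec := idxOf_decomp none X halt
    set A := X.take (X.idxOf none) with hAT
    set R := X.drop (X.idxOf none + 1) with hRT
    have hxa : X.idxOf none = a := hxX
    have hAlen : A.length = a := by rw [hAT, List.length_take]; omega
    have hRlen : R.length = n - a := by rw [hRT, List.length_drop]; omega
    have hnAR : none ∉ A ∧ none ∉ R :=
      not_mem_of_count_one (by rw [← hdec]; exact hcnt)
    set C := R.take (n - b) with hCdef
    set E := R.drop (n - b) with hEdef
    have hClen : C.length = n - b := by rw [hCdef, List.length_take]; omega
    have hElen : E.length = b - a := by rw [hEdef, List.length_drop]; omega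
    have hnC : none ∉ C := fun hm => hnAR.2 (List.mem_of_mem_take hm)
    have hnE : none ∉ E := fun hm => hnAR.2 (List.mem_of_mem_drop hm)
    have hCE : C ++ E = R := by rw [hCdef, hEdef, List.take_append_drop]
    have hXdec : X = A ++ none :: (C ++ E) := by rw [hCE, ← hdec]
    have key1 : topSwap a (n + 1 + a - b) X = A ++ E ++ none :: C := by
      have h := swapAtStar A C E hnAR.1
      rw [hAlen, hClen] at h
      have harith : n + 1 + a - b = a + 1 + (n - b) := by omega
      rw [hXdec, harith]
      exact h
    refine ⟨?_, ?_⟩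
    · rw [key1]
      have h := xstar_middle (A ++ E) C (by simp [hnAR.1, hnE])
      rw [h, List.length_append, hAlen, hElen]; omega
    · rw [key1]
      have h := swapStarTop A E C hnAR.1 hnE
      rw [hAlen, hElen] at h
      have harith : a + (b - a) = b := by omega
      rw [harith] at h
      rw [h, ← hXdec]
end

section
/- In the two-deck card model with n cards, every ordinary transposition E_{i,j} of cards in positions i < x_*(η) < j can be written as a composition of two top-swap moves: E_{i,j} η = T_{i+1, n+i-ℓ+3}(T_{i,j} η) whenever x_*(η) = ℓ and i < ℓ < j. -/
/-- The transposition `E_{i,j}` swapping the contents of positions `a, b`. -/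
def transposePos {n : ℕ} (a b : ℕ) (L : List (Option (Fin n))) :
    List (Option (Fin n)) :=
  (L.set a (L.getD b none)).set b (L.getD a none)

lemma xstar_decomp {n : ℕ} (A T : List (Option (Fin n)))
    (hA : none ∉ A) :
    xstar (A ++ none :: T) = A.length := by
  induction A with
  | nil => simp [xstar, List.idxOf_cons]
  | cons x A ih =>
    simp only [List.mem_cons, not_or] at hA
    simp only [List.cons_append, xstar, List.idxOf_cons, List.length_cons]
    rw [show (x == none) = false by simpa [Option.isSome_iff_ne_none] using fun (h : x = none) => hA.1 h.symm, Bool.cond_false]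
    simpa [xstar] using ih hA.2

lemma key {n : ℕ} (A P Q R : List (Option (Fin n))) (p r : Option (Fin n))
    (hp : p ≠ none) (hr : r ≠ none) (hA : none ∉ A) (hP : none ∉ P)
    (hQ : none ∉ Q) (hR : none ∉ R) :
    transposePos A.length (A.length + P.length + Q.length + 2)
        (A ++ p :: (P ++ none :: (Q ++ r :: R))) =
      topSwap (A.length + 1) (A.length + Q.length + R.length + 3)
        (topSwap A.length (A.length + P.length + Q.length + 2)
          (A ++ p :: (P ++ none :: (Q ++ r :: R)))) := by
  set L : List (Option (Fin n)) := A ++ p :: (P ++ none :: (Q ++ r :: R)) with hLdef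
  have hs : xstar L = A.length + P.length + 1 := by
    have : L = (A ++ p :: P) ++ none :: (Q ++ r :: R) := by simp [hLdef]
    rw [this, xstar_decomp _ _ (by simp [hA, hP, hp]; tauto)]
    simp; omega
  -- pieces of L
  have e1 : L.take A.length = A := List.take_left' rfl
  have e2 : L.drop (A.length + P.length + Q.length + 2) = r :: R := by
    rw [show L = (A ++ p :: (P ++ none :: Q)) ++ r :: R by simp [hLdef]]
    exact List.drop_left' (by simp; omega)
  have e3 : L.drop (A.length + P.length + 1 + 1) = Q ++ r :: R := by
    rw [show L = (A ++ p :: (P ++ [none])) ++ (Q ++ r :: R) by simp [hLdef]]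
    exact List.drop_left' (by simp; omega)
  have e4 : L.drop A.length = p :: (P ++ none :: (Q ++ r :: R)) := by
    rw [hLdef]; exact List.drop_left' rfl
  have h1 : topSwap A.length (A.length + P.length + Q.length + 2) L =
      A ++ (r :: R) ++ none :: (Q ++ p :: P) := by
    simp only [topSwap, hs]
    rw [if_pos ⟨by omega, by omega⟩, if_neg (by omega)]
    rw [e1, e2, e3, e4,
      show A.length + P.length + Q.length + 2 - (A.length + P.length + 1 + 1) = Q.length by omega,
      show A.length + P.length + 1 - A.length = P.length + 1 by omega]
    rw [List.take_left' (by simp)]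
    congr 2
    rw [show P.length + 1 = (p :: P).length from rfl]
    rw [show p :: (P ++ none :: (Q ++ r :: R)) = (p :: P) ++ (none :: (Q ++ r :: R)) by simp]
    rw [List.take_left]
  set L' : List (Option (Fin n)) := A ++ (r :: R) ++ none :: (Q ++ p :: P) with hL'def
  have hs' : xstar L' = A.length + R.length + 1 := by
    have h2 : L' = (A ++ r :: R) ++ none :: (Q ++ p :: P) := by simp [hL'def]
    rw [h2, xstar_decomp _ _ (by simp [hA, hR]; tauto)]
    simp; omega
  have f1 : L'.take (A.length + 1) = A ++ [r] := by
    rw [show L' = (A ++ [r]) ++ (R ++ none :: (Q ++ p :: P)) by simp [hL'def]]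
    exact List.take_left' (by simp)
  have f2 : L'.drop (A.length + Q.length + R.length + 3) = P := by
    rw [show L' = (A ++ r :: (R ++ none :: (Q ++ [p]))) ++ P by simp [hL'def]]
    exact List.drop_left' (by simp; omega)
  have f3 : L'.drop (A.length + R.length + 1 + 1) = Q ++ p :: P := by
    rw [show L' = (A ++ r :: (R ++ [none])) ++ (Q ++ p :: P) by simp [hL'def]]
    exact List.drop_left' (by simp; omega)
  have f4 : L'.drop (A.length + 1) = R ++ none :: (Q ++ p :: P) := by
    rw [show L' = (A ++ [r]) ++ (R ++ none :: (Q ++ p :: P)) by simp [hL'def]]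
    exact List.drop_left' (by simp)
  have h2 : topSwap (A.length + 1) (A.length + Q.length + R.length + 3) L' =
      (A ++ [r]) ++ P ++ none :: ((Q ++ [p]) ++ R) := by
    simp only [topSwap, hs']
    rw [if_pos ⟨by omega, by omega⟩, if_neg (by omega)]
    rw [f1, f2, f3, f4,
      show A.length + Q.length + R.length + 3 - (A.length + R.length + 1 + 1) =
        Q.length + 1 by omega,
      show A.length + R.length + 1 - (A.length + 1) = R.length by omega]
    rw [show Q ++ p :: P = (Q ++ [p]) ++ P by simp, List.take_left' (by simp),
      List.take_left' rfl]
  -- left-hand side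
  have ga : L.getD A.length none = p := by
    have h := List.getElem?_drop (xs := L) (i := A.length) (j := 0)
    rw [e4] at h
    simp only [Nat.add_zero, List.getElem?_cons_zero] at h
    rw [List.getD_eq_getElem?_getD, ← h]; rfl
  have gb : L.getD (A.length + P.length + Q.length + 2) none = r := by
    have h := List.getElem?_drop (xs := L) (i := A.length + P.length + Q.length + 2) (j := 0)
    rw [e2] at h
    simp only [Nat.add_zero, List.getElem?_cons_zero] at h
    rw [List.getD_eq_getElem?_getD, ← h]; rfl
  have t1 : L.set A.length r = A ++ r :: (P ++ none :: (Q ++ r :: R)) := by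
    rw [hLdef, List.set_append, if_neg (by omega)]
    simp
  have t2 : (A ++ r :: (P ++ none :: (Q ++ r :: R))).set
      (A.length + P.length + Q.length + 2) p =
      A ++ r :: (P ++ none :: (Q ++ p :: R)) := by
    rw [show A ++ r :: (P ++ none :: (Q ++ r :: R)) =
      (A ++ r :: (P ++ none :: Q)) ++ r :: R by simp]
    rw [List.set_append, if_neg (by simp; omega),
      show A.length + P.length + Q.length + 2 - (A ++ r :: (P ++ none :: Q)).length = 0
        by simp; omega]
    simp
  rw [transposePos, ga, gb, t1, t2, h1, h2]
  simp


lemma xstar_decomp_exists {n : ℕ} (L : List (Option (Fin n))) (s : ℕ)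
    (hs : s < L.length) (h : xstar L = s) :
    ∃ T D, L = T ++ none :: D ∧ T.length = s ∧ (none : Option (Fin n)) ∉ T := by
  induction L generalizing s with
  | nil => simp at hs
  | cons x L ih =>
    rcases Option.eq_none_or_eq_some x with rfl | ⟨y, rfl⟩
    · have : s = 0 := by simpa [xstar, List.idxOf_cons] using h.symm
      exact ⟨[], L, by simp, by simp [this], by simp⟩
    · have hx2 : xstar L = s - 1 ∧ 1 ≤ s := by
        rw [xstar, List.idxOf_cons] at h
        simp only [show ((some y : Option (Fin n)) == none) = false from rfl,
          Bool.cond_false] at h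
        show List.idxOf none L = s - 1 ∧ 1 ≤ s
        constructor <;> omega
      obtain ⟨T, D, h1, h2, h3⟩ := ih (s - 1) (by simp only [List.length_cons] at hs; omega) hx2.1
      exact ⟨some y :: T, D, by simp [h1], by simp [h2]; omega, by simp [h3]⟩

/-- Every ordinary transposition of cards in positions `i < x_*(η) < j` is a
composition of two top-swap moves:
`E_{i,j} η = T_{i+1, n+i-ℓ+3}(T_{i,j} η)` when `x_*(η) = ℓ` (0-indexed:
`a+1` and `n+a-s+2` with `a = i-1`, `s = ℓ-1`, `b = j-1`). -/
theorem stmt7 (n a s b : ℕ) (has : a < s) (hsb : s < b) (hb : b ≤ n)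
    (L : List (Option (Fin n))) (hL : L ∈ TwoDeck n) (hx : xstar L = s) :
    transposePos a b L = topSwap (a + 1) (n + a - s + 2) (topSwap a b L) := by
  have hperm : L.Perm (none :: (List.finRange n).map some) := by
    simpa [TwoDeck, List.mem_toFinset, List.mem_permutations] using hL
  have hlen : L.length = n + 1 := by simpa using hperm.length_eq
  have hnodup : L.Nodup := hperm.nodup_iff.2 (by
    simp [List.nodup_cons, List.Nodup, List.nodup_finRange]
    exact (List.nodup_finRange n).map (Option.some_injective _))
  obtain ⟨T, D, hTD, hTlen, hTnone⟩ :=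
    xstar_decomp_exists L s (by omega) hx
  have hDlen : D.length = n - s := by
    have := congrArg List.length hTD
    simp [hlen, hTlen] at this; omega
  have hDnone : (none : Option (Fin n)) ∉ D := by
    rw [hTD] at hnodup
    exact (List.nodup_cons.1 hnodup.of_append_right).1
  obtain ⟨p, P, hPdef⟩ := List.exists_cons_of_ne_nil (l := T.drop a)
    (by intro h; have := congrArg List.length h; simp [hTlen] at this; omega)
  obtain ⟨r, R, hRdef⟩ := List.exists_cons_of_ne_nil (l := D.drop (b - s - 1))
    (by intro h; have := congrArg List.length h; simp [hDlen] at this; omega)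
  set A := T.take a with hA
  set Q := D.take (b - s - 1) with hQ
  have hAlen : A.length = a := by rw [hA]; simp [hTlen]; omega
  have hPlen : P.length = s - a - 1 := by
    have := congrArg List.length hPdef
    simp [hTlen] at this; omega
  have hQlen : Q.length = b - s - 1 := by rw [hQ]; simp [hDlen]; omega
  have hRlen : R.length = n - b := by
    have := congrArg List.length hRdef
    simp [hDlen] at this; omega
  have hAnone : (none : Option (Fin n)) ∉ A := fun h => hTnone (List.mem_of_mem_take h)
  have hpnone : p ≠ none := by
    intro h
    exact hTnone (List.mem_of_mem_drop (l := T) (i := a) (by rw [hPdef, h]; simp))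
  have hPnone : (none : Option (Fin n)) ∉ P := fun h =>
    hTnone (List.mem_of_mem_drop (l := T) (i := a) (by rw [hPdef]; simp [h]))
  have hQnone : (none : Option (Fin n)) ∉ Q := fun h => hDnone (List.mem_of_mem_take h)
  have hrnone : r ≠ none := by
    intro h
    exact hDnone (List.mem_of_mem_drop (l := D) (i := b - s - 1) (by rw [hRdef, h]; simp))
  have hRnone : (none : Option (Fin n)) ∉ R := fun h =>
    hDnone (List.mem_of_mem_drop (l := D) (i := b - s - 1) (by rw [hRdef]; simp [h]))
  have hLd : L = A ++ p :: (P ++ none :: (Q ++ r :: R)) := by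
    rw [hTD, show T = A ++ (p :: P) by rw [hA, ← hPdef]; exact (List.take_append_drop _ _).symm,
      show D = Q ++ (r :: R) by rw [hQ, ← hRdef]; exact (List.take_append_drop _ _).symm]
    simp
  rw [show b = A.length + P.length + Q.length + 2 by omega,
    show n + a - s + 2 = A.length + Q.length + R.length + 3 by omega,
    show a = A.length by omega, hLd]
  exact key A P Q R p r hpnone hrnone hAnone hPnone hQnone hRnone
end

section
/- Random transpositions comparison inequality: if μ is the uniform measure on permutations of n cards (with fixed deck sizes) and f: Ω → ℝ, then Var_μ(f) ≤ (1/n) Σ_{i≠j} μ[(f∘E_{i,j} − f)²], where E_{i,j} transposes the cards in positions i and j. -/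
/-!
Induction on the number of cards, conditioning on the card in position `0`. The sum of squared
deviations splits into the deviations inside the fibres `{η | η 0 = p}` and those of the fibre
means. Inside a fibre the induction hypothesis applies and only costs transpositions avoiding
position `0`. Two fibres are matched by left multiplication with `swap p q`, so by
Cauchy–Schwarz the fibre means cost only transpositions `(0 k)`. Conjugating by `swap 0 t` and
averaging over the distinguished position `t` then gives
`2 * n * sumSqDev f ≤ ∑ i, ∑ j, swapEnergy f i j`, i.e. the bound with `1/(2n)` in place of `1/n`.
-/

open Finset Equiv Equiv.Perm

namespace RandomTransposition

section SumSqDev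

variable {ι κ : Type*} [Fintype ι] [Fintype κ]

noncomputable def sumSqDev (g : ι → ℝ) : ℝ :=
  ∑ x, (g x - (∑ y, g y) / Fintype.card ι) ^ 2

theorem sumSqDev_eq (g : ι → ℝ) :
    sumSqDev g = ∑ x, g x ^ 2 - (∑ x, g x) ^ 2 / Fintype.card ι := by
  rcases isEmpty_or_nonempty ι with hι | hι
  · simp [sumSqDev]
  simp only [sumSqDev, sub_sq, sum_add_distrib, sum_sub_distrib, ← sum_mul, ← mul_sum,
    sum_const, card_univ, nsmul_eq_mul]
  field_simp
  ring

theorem sumSqDev_comp_equiv (e : ι ≃ κ) (g : κ → ℝ) : sumSqDev (g ∘ e) = sumSqDev g := by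
  simp only [sumSqDev_eq, Function.comp_apply, Equiv.sum_comp e g,
    Equiv.sum_comp e (fun k => g k ^ 2), Fintype.card_congr e]

theorem sum_sum_sub_sq (g : ι → ℝ) :
    ∑ x, ∑ y, (g x - g y) ^ 2 = 2 * Fintype.card ι * sumSqDev g := by
  rcases isEmpty_or_nonempty ι with hι | hι
  · simp
  simp only [sumSqDev_eq, sub_sq, sum_add_distrib, sum_sub_distrib, ← sum_mul, ← mul_sum,
    sum_const, card_univ, nsmul_eq_mul]
  field_simp
  ring

theorem sumSqDev_prod (g : ι × κ → ℝ) :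
    sumSqDev g = ∑ i, sumSqDev (fun k => g (i, k)) +
      Fintype.card κ * sumSqDev (fun i => (∑ k, g (i, k)) / Fintype.card κ) := by
  rcases isEmpty_or_nonempty ι with hι | hι
  · simp [sumSqDev]
  rcases isEmpty_or_nonempty κ with hκ | hκ
  · simp [sumSqDev]
  simp only [sumSqDev_eq, Fintype.sum_prod_type, Fintype.card_prod, Nat.cast_mul, div_pow,
    ← sum_div, sum_sub_distrib]
  field_simp
  ring

end SumSqDev

section SwapEnergy

variable {α : Type*} [Fintype α] [DecidableEq α]

noncomputable def swapEnergy (f : Perm α → ℝ) (i j : α) : ℝ :=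
  ∑ η, (f (η * swap i j) - f η) ^ 2

theorem sum_sum_swapEnergy_nonneg (f : Perm α → ℝ) : 0 ≤ ∑ i, ∑ j, swapEnergy f i j :=
  sum_nonneg fun _ _ => sum_nonneg fun _ _ => sum_nonneg fun _ _ => sq_nonneg _

@[simp]
theorem swapEnergy_self (f : Perm α → ℝ) (i : α) : swapEnergy f i i = 0 := by
  simp [swapEnergy, swap_self, ← Perm.one_def]

theorem swapEnergy_comm (f : Perm α → ℝ) (i j : α) : swapEnergy f i j = swapEnergy f j i := by
  rw [swapEnergy, swap_comm, swapEnergy]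

theorem swapEnergy_comp_mul_right (f : Perm α → ℝ) (σ : Perm α) (i j : α) :
    swapEnergy (fun η => f (η * σ)) i j = swapEnergy f (σ⁻¹ i) (σ⁻¹ j) := by
  rw [swapEnergy, ← Equiv.sum_comp (Equiv.mulRight σ⁻¹), swapEnergy]
  refine sum_congr rfl fun η _ => ?_
  simp only [coe_mulRight, swap_apply_apply, inv_inv, mul_assoc, inv_mul_cancel, mul_one]

theorem sum_sum_swapEnergy_comp_mul_right (f : Perm α → ℝ) (σ : Perm α) :
    ∑ i, ∑ j, swapEnergy (fun η => f (η * σ)) i j = ∑ i, ∑ j, swapEnergy f i j := by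
  simp only [swapEnergy_comp_mul_right]
  rw [Equiv.sum_comp σ⁻¹ (fun i => ∑ j, swapEnergy f i (σ⁻¹ j))]
  exact sum_congr rfl fun i _ => Equiv.sum_comp σ⁻¹ (swapEnergy f i)

theorem sum_swapEnergy_comp_mul_right (f : Perm α → ℝ) (σ : Perm α) (i : α) :
    ∑ j, swapEnergy (fun η => f (η * σ)) i j = ∑ j, swapEnergy f (σ⁻¹ i) j := by
  simp only [swapEnergy_comp_mul_right]
  exact Equiv.sum_comp σ⁻¹ (swapEnergy f (σ⁻¹ i))

theorem sum_sum_sq_swap_mul_sub (f : Perm α → ℝ) (a : α) :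
    ∑ η, ∑ q, (f (swap (η a) q * η) - f η) ^ 2 = ∑ k, swapEnergy f a k := by
  simp only [swapEnergy]
  rw [sum_comm (s := univ) (t := univ) (f := fun k η => (f (η * swap a k) - f η) ^ 2)]
  refine sum_congr rfl fun η _ => ?_
  rw [← Equiv.sum_comp η]
  simp only [mul_swap_eq_swap_mul]

end SwapEnergy

section Fin

variable {m : ℕ}

theorem sum_perm_fin_succ (h : Perm (Fin (m + 1)) → ℝ) :
    ∑ η, h η = ∑ p, ∑ e, h (decomposeFin.symm (p, e)) := by
  rw [← Equiv.sum_comp decomposeFin.symm h, Fintype.sum_prod_type]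

theorem sum_decomposeFin_symm (p : Fin (m + 1)) (h : Perm (Fin (m + 1)) → ℝ) :
    ∑ e, h (decomposeFin.symm (p, e)) = ∑ η with η 0 = p, h η := by
  rw [sum_filter, sum_perm_fin_succ]
  simp

theorem sum_swap_mul_decomposeFin_symm (p q : Fin (m + 1)) (h : Perm (Fin (m + 1)) → ℝ) :
    ∑ e, h (swap p q * decomposeFin.symm (p, e)) = ∑ e, h (decomposeFin.symm (q, e)) := by
  rw [sum_decomposeFin_symm p (fun η => h (swap p q * η)), sum_decomposeFin_symm]
  refine sum_equiv (Equiv.mulLeft (swap p q)) (fun η => ?_) (fun _ _ => rfl)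
  simp [swap_apply_eq_iff]

theorem decomposeFin_symm_mul_swap_succ (p : Fin (m + 1)) (e : Perm (Fin m)) (i j : Fin m) :
    decomposeFin.symm (p, e) * swap i.succ j.succ = decomposeFin.symm (p, e * swap i j) := by
  ext x
  induction x using Fin.cases with
  | zero => simp [swap_apply_of_ne_of_ne (Fin.succ_ne_zero i).symm (Fin.succ_ne_zero j).symm]
  | succ x => simp [(Fin.succ_injective m).swap_apply]

theorem sum_swapEnergy_decomposeFin_symm (f : Perm (Fin (m + 1)) → ℝ) (i j : Fin m) :
    ∑ p, swapEnergy (fun e => f (decomposeFin.symm (p, e))) i j =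
      swapEnergy f i.succ j.succ := by
  simp only [swapEnergy, sum_perm_fin_succ (fun η => (f (η * swap i.succ j.succ) - f η) ^ 2),
    decomposeFin_symm_mul_swap_succ]

theorem sum_sum_swapEnergy_succ (f : Perm (Fin (m + 1)) → ℝ) :
    ∑ i : Fin m, ∑ j : Fin m, swapEnergy f i.succ j.succ =
      ∑ i, ∑ j, swapEnergy f i j - 2 * ∑ j, swapEnergy f 0 j := by
  have hrow (i : Fin (m + 1)) :
      ∑ j, swapEnergy f i j = swapEnergy f i 0 + ∑ j : Fin m, swapEnergy f i j.succ :=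
    Fin.sum_univ_succ _
  simp only [hrow, sum_add_distrib]
  rw [Fin.sum_univ_succ (fun i => swapEnergy f i 0),
    Fin.sum_univ_succ (fun i => ∑ j : Fin m, swapEnergy f i j.succ)]
  simp only [swapEnergy_self, swapEnergy_comm f _ 0]
  ring

theorem two_mul_mul_card_mul_sumSqDev_fiber_means_le (f : Perm (Fin (m + 1)) → ℝ) :
    2 * (m + 1) * Fintype.card (Perm (Fin m)) *
        sumSqDev (fun p => (∑ e, f (decomposeFin.symm (p, e))) / Fintype.card (Perm (Fin m))) ≤
      ∑ j, swapEnergy f 0 j := by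
  set K : ℝ := (Fintype.card (Perm (Fin m)) : ℝ)
  set M : Fin (m + 1) → ℝ := fun p => (∑ e, f (decomposeFin.symm (p, e))) / K
  have hK : 0 < K := by positivity
  -- Left multiplication by `swap p q` carries the fibre over `p` onto the fibre over `q`.
  have hdiff (p q : Fin (m + 1)) : M q - M p =
      (∑ e, (f (swap p q * decomposeFin.symm (p, e)) - f (decomposeFin.symm (p, e)))) / K := by
    simp only [M, sum_sub_distrib, sum_swap_mul_decomposeFin_symm, sub_div]
  have hpair (p q : Fin (m + 1)) : K * (M q - M p) ^ 2 ≤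
      ∑ e, (f (swap p q * decomposeFin.symm (p, e)) - f (decomposeFin.symm (p, e))) ^ 2 := by
    have hCS := sum_div_card_sq_le_sum_sq_div_card (s := univ)
      (f := fun e => f (swap p q * decomposeFin.symm (p, e)) - f (decomposeFin.symm (p, e)))
    rw [card_univ] at hCS
    rw [hdiff]
    calc K * _ ≤ K * ((∑ e, (f (swap p q * decomposeFin.symm (p, e)) -
          f (decomposeFin.symm (p, e))) ^ 2) / K) := by gcongr
      _ = _ := by field_simp
  calc 2 * (m + 1) * K * sumSqDev M = K * ∑ p, ∑ q, (M q - M p) ^ 2 := by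
        rw [sum_comm, sum_sum_sub_sq, Fintype.card_fin]; push_cast; ring
    _ ≤ ∑ p, ∑ q, ∑ e,
          (f (swap p q * decomposeFin.symm (p, e)) - f (decomposeFin.symm (p, e))) ^ 2 := by
        simp only [mul_sum]
        gcongr with p _ q _
        exact hpair p q
    _ = ∑ η, ∑ q, (f (swap (η 0) q * η) - f η) ^ 2 := by
        rw [sum_perm_fin_succ]
        simp only [decomposeFin_symm_apply_zero]
        exact sum_congr rfl fun p _ => sum_comm
    _ = ∑ j, swapEnergy f 0 j := sum_sum_sq_swap_mul_sub f 0

theorem two_mul_mul_sumSqDev_succ_le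
    (ih : ∀ g : Perm (Fin m) → ℝ, 2 * m * sumSqDev g ≤ ∑ i, ∑ j, swapEnergy g i j)
    (f : Perm (Fin (m + 1)) → ℝ) :
    2 * m * (m + 1) * sumSqDev f ≤
      (m + 1) * (∑ i, ∑ j, swapEnergy f i j - 2 * ∑ j, swapEnergy f 0 j) +
        m * ∑ j, swapEnergy f 0 j := by
  have hdecomp := sumSqDev_prod (f ∘ decomposeFin.symm)
  simp only [sumSqDev_comp_equiv, Function.comp_apply] at hdecomp
  have hwithin : 2 * m * ∑ p, sumSqDev (fun e => f (decomposeFin.symm (p, e))) ≤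
      ∑ i, ∑ j, swapEnergy f i j - 2 * ∑ j, swapEnergy f 0 j := by
    rw [← sum_sum_swapEnergy_succ, mul_sum]
    calc _ ≤ ∑ p, ∑ i, ∑ j, swapEnergy (fun e => f (decomposeFin.symm (p, e))) i j :=
          sum_le_sum fun p _ => ih _
      _ = _ := by
        rw [sum_comm]
        simp only [← sum_swapEnergy_decomposeFin_symm f]
        exact sum_congr rfl fun i _ => sum_comm
  have hbetween := two_mul_mul_card_mul_sumSqDev_fiber_means_le f
  rw [hdecomp]
  have hm : (0 : ℝ) ≤ m := m.cast_nonneg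
  linarith [mul_le_mul_of_nonneg_left hwithin (by linarith : (0 : ℝ) ≤ m + 1),
    mul_le_mul_of_nonneg_left hbetween hm]

theorem two_mul_mul_sumSqDev_succ_le_at
    (ih : ∀ g : Perm (Fin m) → ℝ, 2 * m * sumSqDev g ≤ ∑ i, ∑ j, swapEnergy g i j)
    (f : Perm (Fin (m + 1)) → ℝ) (t : Fin (m + 1)) :
    2 * m * (m + 1) * sumSqDev f ≤
      (m + 1) * (∑ i, ∑ j, swapEnergy f i j - 2 * ∑ j, swapEnergy f t j) +
        m * ∑ j, swapEnergy f t j := by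
  have h := two_mul_mul_sumSqDev_succ_le ih (fun η => f (η * swap 0 t))
  have hS : sumSqDev (fun η => f (η * swap 0 t)) = sumSqDev f :=
    sumSqDev_comp_equiv (Equiv.mulRight _) f
  rwa [hS, sum_sum_swapEnergy_comp_mul_right, sum_swapEnergy_comp_mul_right, swap_inv,
    swap_apply_left] at h

end Fin

theorem two_mul_mul_sumSqDev_le_sum_swapEnergy :
    ∀ (n : ℕ) (f : Perm (Fin n) → ℝ), 2 * n * sumSqDev f ≤ ∑ i, ∑ j, swapEnergy f i j
  | 0, f => by simp
  | 1, f => by simp [sumSqDev]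
  | m + 2, f => by
    have hsum := sum_le_sum fun t (_ : t ∈ univ) =>
      two_mul_mul_sumSqDev_succ_le_at (two_mul_mul_sumSqDev_le_sum_swapEnergy (m + 1)) f t
    simp only [sum_add_distrib, sum_sub_distrib, ← mul_sum, sum_const, card_univ,
      Fintype.card_fin, nsmul_eq_mul] at hsum
    have hD := sum_sum_swapEnergy_nonneg f
    push_cast at hsum ⊢
    have hpos : (0 : ℝ) < (m + 1) * (m + 2) := by positivity
    refine le_of_mul_le_mul_left ?_ hpos
    linarith

end RandomTransposition

/-- Spectral gap bound for random transpositions: for the uniform measure `μ`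
on arrangements of `n` cards in `n` positions (permutations) and any `f`,
`Var_μ(f) ≤ (1/n) ∑_{i≠j} μ[(f∘E_{i,j} − f)²]`, where `E_{i,j}` transposes
the contents of positions `i` and `j`. -/
theorem stmt9 (n : ℕ) (hn : 1 ≤ n) (f : Equiv.Perm (Fin n) → ℝ) :
    (∑ η : Equiv.Perm (Fin n),
        (f η - (∑ η' : Equiv.Perm (Fin n), f η') / (Nat.factorial n : ℝ)) ^ 2) /
        (Nat.factorial n : ℝ) ≤
      (1 / (n : ℝ)) *
        ∑ i : Fin n, ∑ j : Fin n,
          if i ≠ j then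
            (∑ η : Equiv.Perm (Fin n),
                (f (η * Equiv.swap i j) - f η) ^ 2) / (Nat.factorial n : ℝ)
          else 0 := by
  have hS : ∑ η : Perm (Fin n), (f η - (∑ η', f η') / (n.factorial : ℝ)) ^ 2 =
      RandomTransposition.sumSqDev f := by
    simp [RandomTransposition.sumSqDev, Fintype.card_perm]
  have hE : (∑ i : Fin n, ∑ j : Fin n, if i ≠ j then
        (∑ η : Perm (Fin n), (f (η * swap i j) - f η) ^ 2) / (n.factorial : ℝ) else 0) =
      (∑ i, ∑ j, RandomTransposition.swapEnergy f i j) / n.factorial := by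
    simp only [sum_div]
    refine sum_congr rfl fun i _ => sum_congr rfl fun j _ => ?_
    split_ifs with hij
    · rw [RandomTransposition.swapEnergy, sum_div]
    · rw [not_not.mp hij, RandomTransposition.swapEnergy_self, zero_div]
  have hD := RandomTransposition.sum_sum_swapEnergy_nonneg f
  have hmain := RandomTransposition.two_mul_mul_sumSqDev_le_sum_swapEnergy n f
  have hn' : (0 : ℝ) < n := by exact_mod_cast hn
  rw [hS, hE, ← mul_div_assoc, one_div_mul_eq_div]
  gcongr
  rw [le_div_iff₀ hn']
  linarith
end
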